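/- Every h ∈ Ȳ₁ satisfies h(x) ≤ √2 for all x ∈ ℝ; moreover h is differentiable almost everywhere and its almost-everywhere derivative h' satisfies ‖h'‖_{L²(ℝ)} ≤ 4√2. -/

import Mathlib

/-!
A `K`-Lipschitz function lies above the tent of slope `K` through `(x, h x)`, whose area is
`h x ^ 2 / K`; for `h ∈ Ȳ₁` this gives `h x ^ 2 ≤ 2 ∫ h = 2`. For the derivative, `|h'| ≤ 2`
gives `|h'|² ≤ 2 |h'|`, and the total variation `∫ |h'|` of a nonnegative function increasing
up to `0` and decreasing after it is at most `2 h 0 ≤ 2 √2`.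
-/

open MeasureTheory

/-- The set `Ȳ₁`: functions `h : ℝ → [0,∞)` that are 2-Lipschitz, non-decreasing on
`(−∞, 0]`, non-increasing on `[0, ∞)`, and with total integral `1`. -/
def MemY1bar (h : ℝ → ℝ) : Prop :=
  (∀ x, 0 ≤ h x) ∧ LipschitzWith 2 h ∧ MonotoneOn h (Set.Iic 0) ∧
    AntitoneOn h (Set.Ici 0) ∧ (∫ x, h x) = 1

open Set
open scoped NNReal ENNReal

theorem LipschitzWith.two_mul_mul_sub_le_intervalIntegral {f : ℝ → ℝ} {K : ℝ≥0}
    (hf : LipschitzWith K f) (x : ℝ) {r : ℝ} (hr : 0 ≤ r) :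
    2 * r * f x - K * r ^ 2 ≤ ∫ y in (x - r)..(x + r), f y := by
  have hc := hf.continuous
  have hfold : ∫ t in (0 : ℝ)..r, (f (x + t) + f (x - t)) = ∫ y in (x - r)..(x + r), f y := by
    rw [intervalIntegral.integral_add (by apply Continuous.intervalIntegrable; fun_prop)
        (by apply Continuous.intervalIntegrable; fun_prop),
      intervalIntegral.integral_comp_add_left f x, intervalIntegral.integral_comp_sub_left f x,
      add_zero, sub_zero, add_comm, intervalIntegral.integral_add_adjacent_intervals
        (hc.intervalIntegrable _ _) (hc.intervalIntegrable _ _)]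
  have hlower : ∀ t ∈ Icc (0 : ℝ) r, 2 * f x - 2 * K * t ≤ f (x + t) + f (x - t) := by
    intro t ⟨ht, _⟩
    have h₁ := hf.dist_le_mul (x + t) x
    have h₂ := hf.dist_le_mul (x - t) x
    simp only [Real.dist_eq, add_sub_cancel_left, sub_sub_cancel_left, abs_neg,
      abs_of_nonneg ht] at h₁ h₂
    linarith [neg_abs_le (f (x + t) - f x), neg_abs_le (f (x - t) - f x)]
  calc 2 * r * f x - K * r ^ 2 = ∫ t in (0 : ℝ)..r, (2 * f x - 2 * K * t) := by
        rw [intervalIntegral.integral_sub intervalIntegrable_const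
          (by apply Continuous.intervalIntegrable; fun_prop), intervalIntegral.integral_const,
          intervalIntegral.integral_const_mul, integral_id, smul_eq_mul]
        ring
    _ ≤ _ := intervalIntegral.integral_mono_on hr
        (by apply Continuous.intervalIntegrable; fun_prop)
        (by apply Continuous.intervalIntegrable; fun_prop) hlower
    _ = _ := hfold

theorem LipschitzWith.sq_le_mul_integral {f : ℝ → ℝ} {K : ℝ≥0} (hf : LipschitzWith K f)
    (hK : 0 < K) (hf₀ : ∀ x, 0 ≤ f x) (hfi : Integrable f) (x : ℝ) :
    f x ^ 2 ≤ K * ∫ y, f y := by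
  have hK' : (0 : ℝ) < K := hK
  have hr : 0 ≤ f x / K := div_nonneg (hf₀ x) hK'.le
  have htent := hf.two_mul_mul_sub_le_intervalIntegral x hr
  have hsub : ∫ y in (x - f x / K)..(x + f x / K), f y ≤ ∫ y, f y := by
    rw [intervalIntegral.integral_of_le (by linarith)]
    exact setIntegral_le_integral hfi (.of_forall hf₀)
  have hval : 2 * (f x / K) * f x - K * (f x / K) ^ 2 = f x ^ 2 / K := by
    field_simp; ring
  rw [hval, div_le_iff₀ hK'] at htent
  nlinarith

theorem MonotoneOn.lintegral_enorm_deriv_Ioc_le {f : ℝ → ℝ} {a b : ℝ} (hab : a ≤ b)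
    (hf : MonotoneOn f (Icc a b)) :
    ∫⁻ x in Ioc a b, ‖deriv f x‖ₑ ≤ ENNReal.ofReal (f b - f a) := by
  have huIcc : MonotoneOn f (uIcc a b) := by rwa [uIcc_of_le hab]
  have hnonneg : ∀ x ∈ Ioo a b, 0 ≤ deriv f x := fun x hx ↦ by
    rw [← derivWithin_of_mem_nhds (Icc_mem_nhds hx.1 hx.2)]
    exact hf.derivWithin_nonneg
  have hint : IntegrableOn (deriv f) (Ioo a b) :=
    huIcc.intervalIntegrable_deriv.1.mono_set Ioo_subset_Ioc_self
  calc ∫⁻ x in Ioc a b, ‖deriv f x‖ₑ = ∫⁻ x in Ioo a b, ENNReal.ofReal (deriv f x) := by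
        rw [← restrict_Ioo_eq_restrict_Ioc]
        exact setLIntegral_congr_fun measurableSet_Ioo fun x hx ↦
          Real.enorm_of_nonneg (hnonneg x hx)
    _ = ENNReal.ofReal (∫ x in a..b, deriv f x) := by
        rw [intervalIntegral.integral_of_le hab, ← restrict_Ioo_eq_restrict_Ioc,
          ofReal_integral_eq_lintegral_ofReal hint
            ((ae_restrict_iff' measurableSet_Ioo).2 (.of_forall hnonneg))]
    _ ≤ ENNReal.ofReal (f b - f a) := by
        have hmem := huIcc.intervalIntegral_deriv_mem_uIcc
        rw [uIcc_of_le (sub_nonneg.2 (hf (left_mem_Icc.2 hab) (right_mem_Icc.2 hab) hab))] at hmem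
        exact ENNReal.ofReal_le_ofReal hmem.2

theorem AntitoneOn.lintegral_enorm_deriv_Ioc_le {f : ℝ → ℝ} {a b : ℝ} (hab : a ≤ b)
    (hf : AntitoneOn f (Icc a b)) :
    ∫⁻ x in Ioc a b, ‖deriv f x‖ₑ ≤ ENNReal.ofReal (f a - f b) := by
  simpa [deriv.neg', enorm_neg, sub_eq_neg_add, add_comm] using
    hf.neg.lintegral_enorm_deriv_Ioc_le hab

theorem lintegral_enorm_deriv_le_of_monotoneOn_of_antitoneOn {f : ℝ → ℝ} {c : ℝ}
    (hf₀ : ∀ x, 0 ≤ f x) (hmono : MonotoneOn f (Iic c)) (hanti : AntitoneOn f (Ici c)) :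
    ∫⁻ x, ‖deriv f x‖ₑ ≤ 2 * ENNReal.ofReal (f c) := by
  have hcover : (⋃ n : ℕ, Ioc (c - n) (c + n)) = univ := by
    refine iUnion_eq_univ_iff.2 fun x ↦ ?_
    obtain ⟨n, hn⟩ := exists_nat_gt |x - c|
    exact ⟨n, by linarith [neg_abs_le (x - c)], by linarith [le_abs_self (x - c)]⟩
  have hdir : Directed (· ⊆ ·) fun n : ℕ ↦ Ioc (c - n) (c + n) :=
    Monotone.directed_le fun m n hmn ↦ Ioc_subset_Ioc (by gcongr) (by gcongr)
  rw [← setLIntegral_univ, ← hcover, setLIntegral_iUnion_of_directed _ hdir]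
  refine iSup_le fun n ↦ ?_
  have hn : c - n ≤ c := by linarith [n.cast_nonneg (α := ℝ)]
  have hn' : c ≤ c + n := by linarith [n.cast_nonneg (α := ℝ)]
  calc ∫⁻ x in Ioc (c - n) (c + n), ‖deriv f x‖ₑ
      ≤ (∫⁻ x in Ioc (c - n) c, ‖deriv f x‖ₑ) + ∫⁻ x in Ioc c (c + n), ‖deriv f x‖ₑ := by
        rw [← Ioc_union_Ioc_eq_Ioc hn hn']
        exact lintegral_union_le (fun x ↦ ‖deriv f x‖ₑ) _ _
    _ ≤ ENNReal.ofReal (f c - f (c - n)) + ENNReal.ofReal (f c - f (c + n)) :=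
        add_le_add ((hmono.mono Icc_subset_Iic_self).lintegral_enorm_deriv_Ioc_le hn)
          ((hanti.mono Icc_subset_Ici_self).lintegral_enorm_deriv_Ioc_le hn')
    _ ≤ 2 * ENNReal.ofReal (f c) := by
        rw [two_mul]
        gcongr <;> linarith [hf₀ (c - n), hf₀ (c + n)]

theorem sq_eLpNorm_two_le_mul_lintegral_enorm {α E : Type*} [MeasurableSpace α]
    [NormedAddCommGroup E] {μ : Measure α} {f : α → E} {C : ℝ≥0} (hf : ∀ x, ‖f x‖ₑ ≤ C) :
    eLpNorm f 2 μ ^ 2 ≤ C * ∫⁻ x, ‖f x‖ₑ ∂μ := by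
  have := eLpNorm_nnreal_pow_eq_lintegral (f := f) (μ := μ) (p := 2) two_ne_zero
  simp only [ENNReal.coe_ofNat, NNReal.coe_ofNat, ENNReal.rpow_two] at this
  rw [this, ← lintegral_const_mul' _ _ ENNReal.coe_ne_top]
  exact lintegral_mono fun x ↦ by rw [sq]; gcongr; exact hf x

/-- Every `h ∈ Ȳ₁` is bounded by `√2`, is differentiable almost everywhere, and its
a.e. derivative has `L²` norm at most `4√2`. -/
theorem y1bar_bounds (h : ℝ → ℝ) (hh : MemY1bar h) :
    (∀ x, h x ≤ Real.sqrt 2) ∧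
    (∀ᵐ x ∂(volume : Measure ℝ), DifferentiableAt ℝ h x) ∧
    eLpNorm (deriv h) 2 (volume : Measure ℝ) ≤ ENNReal.ofReal (4 * Real.sqrt 2) := by
  obtain ⟨h₀, hlip, hmono, hanti, hint⟩ := hh
  have hsup : ∀ x, h x ≤ √2 := fun x ↦ Real.le_sqrt_of_sq_le <| by
    simpa [hint] using hlip.sq_le_mul_integral two_pos h₀
      (Integrable.of_integral_ne_zero (by simp [hint])) x
  have hderiv : ∀ x, ‖deriv h x‖ₑ ≤ (2 : ℝ≥0) := fun x ↦ by
    exact_mod_cast norm_deriv_le_of_lipschitz hlip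
  have hsq : eLpNorm (deriv h) 2 volume ^ 2 ≤ ENNReal.ofReal (4 * √2) :=
    calc eLpNorm (deriv h) 2 volume ^ 2 ≤ (2 : ℝ≥0) * ∫⁻ x, ‖deriv h x‖ₑ :=
          sq_eLpNorm_two_le_mul_lintegral_enorm hderiv
      _ ≤ (2 : ℝ≥0) * (2 * ENNReal.ofReal (h 0)) := by
          gcongr
          exact lintegral_enorm_deriv_le_of_monotoneOn_of_antitoneOn h₀ hmono hanti
      _ = ENNReal.ofReal (4 * h 0) := by
          rw [ENNReal.ofReal_mul (by norm_num), ← mul_assoc]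
          norm_num
      _ ≤ ENNReal.ofReal (4 * √2) := by gcongr; exact hsup 0
  have hone : 1 ≤ ENNReal.ofReal (4 * √2) :=
    ENNReal.one_le_ofReal.2 (by nlinarith [Real.one_lt_sqrt_two])
  refine ⟨hsup, hlip.ae_differentiableAt, ?_⟩
  rcases le_total (eLpNorm (deriv h) 2 volume) 1 with hle | hle
  · exact hle.trans hone
  · exact (le_self_pow₀ hle two_ne_zero).trans hsq
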